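/- arXiv:2511.19851 — 3 statements merged into one kernel-verified Lean document; each statement's English description precedes it below -/
import Mathlib

section
/- Let K be a nonempty finite index set, c > 0 a bandwidth budget, and for each k ∈ K let f_k : (0, ∞) → ℝ be strictly decreasing. Suppose b* = (b*_k)_{k∈K} satisfies b*_k > 0 for all k, Σ_{k∈K} b*_k = c, and f_k(b*_k) = d for all k (all delays equal to a common value d). Then for every b = (b_k)_{k∈K} with b_k > 0 for all k and Σ_{k∈K} b_k ≤ c, one has max_{k∈K} f_k(b_k) ≥ d. In particular, b* minimizes the maximum delay max_{k∈K} f_k(b_k) subject to the budget constraint. -/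
/-- If each delay function `f k` is strictly decreasing in the allocated bandwidth,
and an allocation `b*` is positive, exhausts the budget `c`, and equalizes all delays at
a common value `d`, then any other positive allocation within the budget has maximum
delay at least `d`; hence `b*` minimizes the maximum delay. -/
theorem equal_delay_allocation_minimizes_max
    {ι : Type*} [Fintype ι] [Nonempty ι]
    (c : ℝ) (hc : 0 < c)
    (f : ι → ℝ → ℝ) (hf : ∀ k, StrictAntiOn (f k) (Set.Ioi 0))
    (bstar : ι → ℝ) (hbstar_pos : ∀ k, 0 < bstar k)
    (hbstar_sum : ∑ k, bstar k = c)
    (d : ℝ) (hd : ∀ k, f k (bstar k) = d) :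
    ∀ b : ι → ℝ, (∀ k, 0 < b k) → ∑ k, b k ≤ c →
      d ≤ Finset.univ.sup' Finset.univ_nonempty (fun k => f k (b k)) := by
  intro b hb hsum
  -- there exists k with b k ≤ bstar k
  obtain ⟨k, hk⟩ : ∃ k, b k ≤ bstar k := by
    by_contra h
    push_neg at h
    have : ∑ k, bstar k < ∑ k, b k :=
      Finset.sum_lt_sum_of_nonempty Finset.univ_nonempty (fun i _ => h i)
    linarith [hbstar_sum ▸ this]
  have h1 : d ≤ f k (b k) := by
    rw [← hd k]
    exact (hf k).antitoneOn (hb k) (hbstar_pos k) hk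
  exact le_trans h1 (Finset.le_sup' (fun k => f k (b k)) (Finset.mem_univ k))
end

section
/- Let K be a nonempty finite index set, c > 0, and for each k ∈ K let f_k : (0, ∞) → ℝ be continuous and strictly decreasing with f_k(b) → ∞ as b → 0⁺. Then there exist a unique real number d and a unique vector (b_k)_{k∈K} with b_k ∈ (0, c] for all k, Σ_{k∈K} b_k = c, and f_k(b_k) = d for all k. -/
/-!
Each `f k` is a decreasing bijection from `(0, c]` onto `[f k c, ∞)` (intermediate value theorem
and the blow-up at `0`), and its inverse `g k` is continuous because an order isomorphism between
order topologies is a homeomorphism. The total allocation `d ↦ ∑ k, g k d` is then continuous, is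
at least `c` at `d = maxₖ f k c` and at most `c` at `d = maxₖ f k (c / |ι|)`, so it takes the value
`c`. Uniqueness holds because raising the common delay strictly lowers every allocation.
-/

open Set Filter Topology

section Inverse

variable {f : ℝ → ℝ} {c : ℝ}

theorem surjOn_Ioc_Ici_of_tendsto_atTop (hc : 0 < c) (hcont : ContinuousOn f (Ioi 0))
    (hblow : Tendsto f (𝓝[>] 0) atTop) : SurjOn f (Ioc 0 c) (Ici (f c)) := by
  intro d (hd : f c ≤ d)
  obtain ⟨ε, hεd, hε⟩ := ((hblow.eventually_ge_atTop d).and (Ioo_mem_nhdsGT hc)).exists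
  obtain ⟨b, hb, rfl⟩ := intermediate_value_Icc' hε.2.le
    (hcont.mono fun x hx => hε.1.trans_le hx.1) ⟨hd, hεd⟩
  exact ⟨b, ⟨hε.1.trans_le hb.1, hb.2⟩, rfl⟩

theorem exists_continuous_inverse_of_strictAntiOn (hc : 0 < c) (hcont : ContinuousOn f (Ioi 0))
    (hanti : StrictAntiOn f (Ioi 0)) (hblow : Tendsto f (𝓝[>] 0) atTop) :
    ∃ g : ℝ → ℝ, Continuous g ∧ (∀ d, g d ∈ Ioc 0 c) ∧ ∀ d, f c ≤ d → f (g d) = d := by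
  have hpos : Ioc 0 c ⊆ Ioi 0 := Ioc_subset_Ioi_self
  let φ : Ioc 0 c → (Ici (f c))ᵒᵈ := fun b =>
    OrderDual.toDual ⟨f b, (hanti.le_iff_ge hc (hpos b.2)).2 b.2.2⟩
  have hφ_mono : StrictMono φ := fun a b hab => hanti (hpos a.2) (hpos b.2) hab
  have hφ_surj : Function.Surjective φ := fun d => by
    obtain ⟨b, hb, hbd⟩ := surjOn_Ioc_Ici_of_tendsto_atTop hc hcont hblow (OrderDual.ofDual d).2
    exact ⟨⟨b, hb⟩, Subtype.ext hbd⟩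
  let e := hφ_mono.orderIsoOfSurjective φ hφ_surj
  -- clamping `d` to `[f c, ∞)` extends the inverse continuously to all of `ℝ`
  refine ⟨fun d => e.symm (OrderDual.toDual ⟨max (f c) d, le_max_left (f c) d⟩), ?_,
    fun d => (e.symm _).2, fun d hd => ?_⟩
  · exact continuous_subtype_val.comp <| e.symm.continuous.comp <|
      continuous_toDual.comp <| (continuous_const.max continuous_id).subtype_mk _
  · have := congrArg (fun x => ((OrderDual.ofDual x : Ici (f c)) : ℝ))
      (e.apply_symm_apply (OrderDual.toDual ⟨max (f c) d, le_max_left (f c) d⟩))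
    exact this.trans (max_eq_right hd)

end Inverse

section Levels

variable {ι : Type*} [Fintype ι] [Nonempty ι] {f : ι → ℝ → ℝ} {s : Set ℝ} {b b' : ι → ℝ}
  {d d' : ℝ}

theorem sum_lt_sum_of_level_lt (hanti : ∀ k, StrictAntiOn (f k) s) (hb : ∀ k, b k ∈ s)
    (hb' : ∀ k, b' k ∈ s) (hd : ∀ k, f k (b k) = d) (hd' : ∀ k, f k (b' k) = d') (h : d < d') :
    ∑ k, b' k < ∑ k, b k :=
  Finset.sum_lt_sum_of_nonempty Finset.univ_nonempty fun k _ =>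
    ((hanti k).lt_iff_gt (hb k) (hb' k)).1 (by rw [hd, hd']; exact h)

theorem level_eq_of_sum_eq (hanti : ∀ k, StrictAntiOn (f k) s) (hb : ∀ k, b k ∈ s)
    (hb' : ∀ k, b' k ∈ s) (hd : ∀ k, f k (b k) = d) (hd' : ∀ k, f k (b' k) = d')
    (hsum : ∑ k, b k = ∑ k, b' k) : d = d' := by
  rcases lt_trichotomy d d' with h | h | h
  · exact absurd hsum (sum_lt_sum_of_level_lt hanti hb hb' hd hd' h).ne'
  · exact h
  · exact absurd hsum (sum_lt_sum_of_level_lt hanti hb' hb hd' hd h).ne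

theorem exists_level_sum_eq {g : ι → ℝ → ℝ} {c : ℝ} (hc : 0 < c)
    (hanti : ∀ k, StrictAntiOn (f k) (Ioi 0)) (hg : ∀ k, Continuous (g k))
    (hg_mem : ∀ k d, g k d ∈ Ioc 0 c) (hfg : ∀ k d, f k c ≤ d → f k (g k d) = d) :
    ∃ d, (∀ k, f k c ≤ d) ∧ ∑ k, g k d = c := by
  set n : ℝ := (Fintype.card ι : ℝ)
  have hn : 1 ≤ n := Nat.one_le_cast.2 Fintype.card_pos
  have hcn : c / n ∈ Ioc 0 c := ⟨by positivity, div_le_self hc.le hn⟩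
  set D := Finset.univ.sup' Finset.univ_nonempty fun k => f k c
  set D₁ := Finset.univ.sup' Finset.univ_nonempty fun k => f k (c / n)
  have hD : ∀ k, f k c ≤ D := fun k => Finset.le_sup' (fun k => f k c) (Finset.mem_univ k)
  have hD₁ : ∀ k, f k (c / n) ≤ D₁ := fun k =>
    Finset.le_sup' (fun k => f k (c / n)) (Finset.mem_univ k)
  have hDD₁ : D ≤ D₁ := Finset.sup'_le _ _ fun k _ =>
    (((hanti k).le_iff_ge hc hcn.1).2 hcn.2).trans (hD₁ k)
  have h_at_D : c ≤ ∑ k, g k D := by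
    obtain ⟨k₀, -, hk₀⟩ := Finset.exists_mem_eq_sup' Finset.univ_nonempty fun k => f k c
    have hgk₀ : g k₀ D = c :=
      (hanti k₀).injOn (hg_mem k₀ D).1 hc ((hfg k₀ D (hD k₀)).trans hk₀)
    exact hgk₀ ▸ Finset.single_le_sum (fun k _ => (hg_mem k D).1.le) (Finset.mem_univ k₀)
  have h_at_D₁ : ∑ k, g k D₁ ≤ c := by
    have hle : ∀ k, g k D₁ ≤ c / n := fun k =>
      ((hanti k).le_iff_ge hcn.1 (hg_mem k D₁).1).1 <| by
        rw [hfg k D₁ ((hD k).trans hDD₁)]; exact hD₁ k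
    calc ∑ k, g k D₁ ≤ Finset.univ.card • (c / n) :=
          Finset.sum_le_card_nsmul _ _ _ fun k _ => hle k
      _ = c := by rw [Finset.card_univ, nsmul_eq_mul]; exact mul_div_cancel₀ c (by positivity)
  obtain ⟨d, hd, hsum⟩ := intermediate_value_Icc' hDD₁
    (continuous_finsetSum _ fun k _ => hg k).continuousOn ⟨h_at_D₁, h_at_D⟩
  exact ⟨d, fun k => (hD k).trans hd.1, hsum⟩

end Levels

/-- For continuous, strictly decreasing delay functions blowing up at zero bandwidth,
there is a unique common delay value `d` and a unique positive allocation exhausting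
the budget `c` at which all delays equal `d`. -/
theorem exists_unique_equal_delay_allocation
    {ι : Type*} [Fintype ι] [Nonempty ι]
    (c : ℝ) (hc : 0 < c)
    (f : ι → ℝ → ℝ)
    (hcont : ∀ k, ContinuousOn (f k) (Set.Ioi 0))
    (hanti : ∀ k, StrictAntiOn (f k) (Set.Ioi 0))
    (hblow : ∀ k, Filter.Tendsto (f k) (nhdsWithin 0 (Set.Ioi 0)) Filter.atTop) :
    ∃! p : ℝ × (ι → ℝ),
      (∀ k, p.2 k ∈ Set.Ioc 0 c) ∧ (∑ k, p.2 k = c) ∧ (∀ k, f k (p.2 k) = p.1) := by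
  choose g hg hg_mem hfg using fun k =>
    exists_continuous_inverse_of_strictAntiOn hc (hcont k) (hanti k) (hblow k)
  obtain ⟨d, hd, hsum⟩ := exists_level_sum_eq hc hanti hg hg_mem hfg
  have hpos : Ioc 0 c ⊆ Ioi 0 := Ioc_subset_Ioi_self
  have hgd : ∀ k, f k (g k d) = d := fun k => hfg k d (hd k)
  refine ⟨(d, fun k => g k d), ⟨fun k => hg_mem k d, hsum, hgd⟩, ?_⟩
  rintro ⟨d', b⟩ ⟨hb_mem, hb_sum, hb⟩
  obtain rfl : d' = d := level_eq_of_sum_eq hanti (fun k => hpos (hb_mem k))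
    (fun k => hpos (hg_mem k d)) hb hgd (hb_sum.trans hsum.symm)
  exact Prod.ext rfl <| funext fun k =>
    (hanti k).injOn (hpos (hb_mem k)) (hpos (hg_mem k d')) ((hb k).trans (hgd k).symm)
end

section
/- Let I be a nonempty finite index set, and let B > 0, A ≥ 0, and a_i > 0, c_i > 0 for each i ∈ I. Then the function b ↦ A + Σ_{i∈I} a_i / (b·B·log₂(1 + c_i/b)) is strictly decreasing on (0, ∞). -/
/-!
Write the rate as `b * B * logb 2 (1 + c / b) = (B / log 2) * c * φ (c / b)` with
`φ t = log (1 + t) / t`. Since `φ t` is the slope of the strictly concave `log` between `1` and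
`1 + t`, it is strictly decreasing in `t`; as `c / b` decreases in `b`, every rate is strictly
increasing and positive, so every transmission delay `a / rate` is strictly decreasing.
-/

open Real Set

lemma log_one_add_div_self_strictAntiOn :
    StrictAntiOn (fun t : ℝ => log (1 + t) / t) (Ioi 0) := by
  intro s (hs : 0 < s) t (ht : 0 < t) hst
  have h1 : (1 : ℝ) ∈ Ioi 0 := mem_Ioi.2 one_pos
  have hsecant := strictConcaveOn_log_Ioi.secant_strict_mono h1
    (mem_Ioi.2 (by linarith : (0 : ℝ) < 1 + s)) (mem_Ioi.2 (by linarith : (0 : ℝ) < 1 + t))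
    (by linarith) (by linarith) (by linarith)
  simpa only [log_one, sub_zero, add_sub_cancel_left] using hsecant

lemma mul_log_one_add_div_strictMonoOn {c : ℝ} (hc : 0 < c) :
    StrictMonoOn (fun b : ℝ => b * log (1 + c / b)) (Ioi 0) := by
  intro x (hx : 0 < x) y (hy : 0 < y) hxy
  have hfactor : ∀ b : ℝ, 0 < b → b * log (1 + c / b) = c * (log (1 + c / b) / (c / b)) :=
    fun b hb => by field_simp
  have hcyx : c / y < c / x := div_lt_div_of_pos_left hc hx hxy
  simp only [hfactor x hx, hfactor y hy]
  exact mul_lt_mul_of_pos_left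
    (log_one_add_div_self_strictAntiOn (div_pos hc hy) (div_pos hc hx) hcyx) hc

lemma mul_mul_logb_one_add_div_pos {B c b : ℝ} (hB : 0 < B) (hc : 0 < c) (hb : 0 < b) :
    0 < b * B * logb 2 (1 + c / b) := by
  have : 0 < logb 2 (1 + c / b) :=
    logb_pos one_lt_two (lt_add_of_pos_right 1 (div_pos hc hb))
  positivity

lemma mul_mul_logb_one_add_div_strictMonoOn {B c : ℝ} (hB : 0 < B) (hc : 0 < c) :
    StrictMonoOn (fun b : ℝ => b * B * logb 2 (1 + c / b)) (Ioi 0) := by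
  intro x hx y hy hxy
  have hscale : ∀ b : ℝ, b * B * logb 2 (1 + c / b) = B / log 2 * (b * log (1 + c / b)) :=
    fun b => by rw [logb]; ring
  simp only [hscale]
  exact mul_lt_mul_of_pos_left (mul_log_one_add_div_strictMonoOn hc hx hy hxy)
    (div_pos hB (log_pos one_lt_two))

theorem SL_delay_strictAnti_general
    {ι : Type*} [Fintype ι] [Nonempty ι]
    (B A : ℝ) (hB : 0 < B)
    (a c : ι → ℝ) (ha : ∀ i, 0 < a i) (hc : ∀ i, 0 < c i) :
    StrictAntiOn
      (fun b : ℝ => A + ∑ i, a i / (b * B * Real.logb 2 (1 + c i / b)))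
      (Set.Ioi 0) := by
  intro x hx y hy hxy
  refine add_lt_add_right (Finset.sum_lt_sum_of_nonempty Finset.univ_nonempty fun i _ => ?_) A
  exact div_lt_div_of_pos_left (ha i) (mul_mul_logb_one_add_div_pos hB (hc i) hx)
    (mul_mul_logb_one_add_div_strictMonoOn hB (hc i) hx hy hxy)

/-- The SL round delay, a constant `A` plus a finite sum of transmission delays
`a_i / (b·B·log₂(1 + c_i/b))`, is strictly decreasing in the SL bandwidth fraction
`b` on `(0, ∞)`, where `B > 0`, `A ≥ 0`, and `a_i, c_i > 0`. -/
theorem SL_delay_strictAnti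
    {ι : Type*} [Fintype ι] [Nonempty ι]
    (B A : ℝ) (hB : 0 < B) (hA : 0 ≤ A)
    (a c : ι → ℝ) (ha : ∀ i, 0 < a i) (hc : ∀ i, 0 < c i) :
    StrictAntiOn
      (fun b : ℝ => A + ∑ i, a i / (b * B * Real.logb 2 (1 + c i / b)))
      (Set.Ioi 0) :=
  SL_delay_strictAnti_general B A hB a c ha hc
end
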